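/- Let A be a finite-dimensional vector space with nondegenerate skew-symmetric bilinear form 𝔅, let λ be a scalar, r ∈ A ⊗ A, and define P: A → A by P(a) = Tᵣ(𝔅♯(a)). Then r − σ(r) = −λ φ_𝔅 if and only if 𝔅(P(a), b) + 𝔅(a, P(b)) + λ𝔅(a, b) = 0 for all a, b ∈ A. -/

import Mathlib

open TensorProduct

section
variable {K : Type*} [Field K] {A : Type*} [AddCommGroup A] [Module K A]

/-- perm identity for a plain binary operation -/
def IsPermFn {X : Type*} (mu : X → X → X) : Prop :=
  ∀ a b c : X, mu a (mu b c) = mu (mu a b) c ∧ mu (mu a b) c = mu (mu b a) c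

/-- perm algebra: bundled bilinear multiplication satisfying the perm identities -/
def IsPermMul (m : A →ₗ[K] A →ₗ[K] A) : Prop :=
  ∀ a b c : A, m a (m b c) = m (m a b) c ∧ m (m a b) c = m (m b a) c

/-- The map `T_r : A* → A` associated with a 2-tensor `r ∈ A ⊗ A`,
`T_r(a*) = Σ ⟨a*, a_i⟩ b_i` for `r = Σ a_i ⊗ b_i`. -/
noncomputable def Tten (r : A ⊗[K] A) : Module.Dual K A →ₗ[K] A :=
  TensorProduct.lift (LinearMap.mk₂ K
    (fun a b => (Module.Dual.eval K A a).smulRight b)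
    (by intro a a' b; ext f; simp [add_smul])
    (by intro c a b; ext f; simp [mul_smul])
    (by intro a b b'; ext f; simp [smul_add])
    (by intro c a b; ext f; simp [smul_comm c])) r

noncomputable def mulT (m : A →ₗ[K] A →ₗ[K] A) : A ⊗[K] A →ₗ[K] A := TensorProduct.lift m

noncomputable def p13_23 (m : A →ₗ[K] A →ₗ[K] A) :
    (A ⊗[K] A) ⊗[K] (A ⊗[K] A) →ₗ[K] (A ⊗[K] A) ⊗[K] A :=
  (TensorProduct.map LinearMap.id (mulT m)) ∘ₗ
    (TensorProduct.tensorTensorTensorComm K A A A A).toLinearMap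

noncomputable def p12_13 (m : A →ₗ[K] A →ₗ[K] A) :
    (A ⊗[K] A) ⊗[K] (A ⊗[K] A) →ₗ[K] (A ⊗[K] A) ⊗[K] A :=
  (TensorProduct.assoc K A A A).symm.toLinearMap ∘ₗ
    (TensorProduct.map (mulT m) LinearMap.id) ∘ₗ
    (TensorProduct.tensorTensorTensorComm K A A A A).toLinearMap

noncomputable def p13_12 (m : A →ₗ[K] A →ₗ[K] A) :
    (A ⊗[K] A) ⊗[K] (A ⊗[K] A) →ₗ[K] (A ⊗[K] A) ⊗[K] A :=
  (TensorProduct.assoc K A A A).symm.toLinearMap ∘ₗ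
    (TensorProduct.map (mulT m) (TensorProduct.comm K A A).toLinearMap) ∘ₗ
    (TensorProduct.tensorTensorTensorComm K A A A A).toLinearMap

noncomputable def p12_23 (m : A →ₗ[K] A →ₗ[K] A) :
    (A ⊗[K] A) ⊗[K] (A ⊗[K] A) →ₗ[K] (A ⊗[K] A) ⊗[K] A :=
  (TensorProduct.assoc K A A A).symm.toLinearMap ∘ₗ
    (TensorProduct.leftComm K A A A).toLinearMap ∘ₗ
    (TensorProduct.map (mulT m) LinearMap.id) ∘ₗ
    (TensorProduct.tensorTensorTensorComm K A A A A).toLinearMap ∘ₗ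
    (TensorProduct.map (TensorProduct.comm K A A).toLinearMap LinearMap.id)

/-- `[[r,r]] = r₁₂·r₂₃ − r₁₃·r₂₃ + r₁₂·r₁₃ − r₁₃·r₁₂` -/
noncomputable def ybrac (m : A →ₗ[K] A →ₗ[K] A) (r : A ⊗[K] A) : (A ⊗[K] A) ⊗[K] A :=
  p12_23 m (r ⊗ₜ r) - p13_23 m (r ⊗ₜ r) + p12_13 m (r ⊗ₜ r) - p13_12 m (r ⊗ₜ r)

/-- the perm Yang-Baxter equation -/
noncomputable def IsPYBESol (m : A →ₗ[K] A →ₗ[K] A) (r : A ⊗[K] A) : Prop := ybrac m r = 0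

/-- `(id ⊗ R(a) − ad(a) ⊗ id)(s) = 0` for all `a`. -/
def RadInv (m : A →ₗ[K] A →ₗ[K] A) (s : A ⊗[K] A) : Prop :=
  ∀ a : A, TensorProduct.map LinearMap.id (m.flip a) s
    = TensorProduct.map (m a - m.flip a) LinearMap.id s

variable {V : Type*} [AddCommGroup V] [Module K V]

/-- representation of a perm algebra -/
def IsPermRep (m : A →ₗ[K] A →ₗ[K] A) (l rr : A →ₗ[K] V →ₗ[K] V) : Prop :=
  ∀ a b : A, l (m a b) = l a ∘ₗ l b ∧ l a ∘ₗ l b = l b ∘ₗ l a ∧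
    rr (m a b) = rr b ∘ₗ rr a ∧ rr b ∘ₗ rr a = rr b ∘ₗ l a ∧ rr b ∘ₗ l a = l a ∘ₗ rr b

/-- A-perm algebra -/
def IsAPermAlg (m : A →ₗ[K] A →ₗ[K] A) (l rr : A →ₗ[K] V →ₗ[K] V)
    (mV : V →ₗ[K] V →ₗ[K] V) : Prop :=
  IsPermRep m l rr ∧ IsPermMul mV ∧
  (∀ (a : A) (u w : V), rr a (mV u w) = rr a (mV w u) ∧ rr a (mV u w) = mV u (rr a w)) ∧
  (∀ (a : A) (u w : V), mV (l a u) w = mV (rr a u) w ∧ mV (l a u) w = l a (mV u w) ∧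
    l a (mV u w) = mV u (l a w))


/-
`T_{σ r}` is the transpose of `T_r`, and skew-symmetry of `𝔅` turns this into
`𝔅(T_{σ r}(𝔅♯ a), b) = -𝔅(a, T_r(𝔅♯ b))`. Hence with `s = r - σ r + λ φ_𝔅` the left side of the
identity is `𝔅(T_s(𝔅♯ a), b)`, which vanishes for all `a, b` iff `T_s = 0` (since `𝔅♯` is
bijective), iff `s = 0` (since `s ↦ T_s` is injective in finite dimension).
-/

@[simp]
lemma Tten_tmul (x y : A) (f : Module.Dual K A) : Tten (x ⊗ₜ[K] y) f = f x • y := by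
  simp [Tten]

@[simp]
lemma Tten_zero : Tten (0 : A ⊗[K] A) = 0 := by
  simp [Tten]

@[simp]
lemma Tten_add (u v : A ⊗[K] A) : Tten (u + v) = Tten u + Tten v := by
  simp [Tten]

@[simp]
lemma Tten_sub (u v : A ⊗[K] A) : Tten (u - v) = Tten u - Tten v := by
  simp [Tten]

@[simp]
lemma Tten_smul (c : K) (u : A ⊗[K] A) : Tten (c • u) = c • Tten u := by
  simp [Tten]

lemma Tten_comm_apply (r : A ⊗[K] A) (f g : Module.Dual K A) :
    f (Tten (TensorProduct.comm K A A r) g) = g (Tten r f) := by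
  induction r using TensorProduct.induction_on with
  | zero => simp
  | tmul x y => simp [mul_comm]
  | add u v hu hv => simp [hu, hv]

lemma Tten_eq_dualTensorHomEquiv [FiniteDimensional K A] (s : A ⊗[K] A) :
    Tten s = dualTensorHomEquiv K (Module.Dual K A) A
      (TensorProduct.congr (Module.evalEquiv K A) (LinearEquiv.refl K A) s) := by
  induction s using TensorProduct.induction_on with
  | zero => simp
  | tmul x y => ext f; simp
  | add u v hu hv => simp [hu, hv]

lemma Tten_injective [FiniteDimensional K A] : Function.Injective (Tten : A ⊗[K] A → _) :=
  fun s t h => by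
    rw [Tten_eq_dualTensorHomEquiv, Tten_eq_dualTensorHomEquiv] at h
    exact (TensorProduct.congr _ _).injective ((dualTensorHomEquiv K _ A).injective h)

lemma LinearMap.eq_zero_iff_forall_bilin_eq_zero {B : A →ₗ[K] A →ₗ[K] K}
    (hB : Function.Bijective B) (T : Module.Dual K A →ₗ[K] A) :
    T = 0 ↔ ∀ a b : A, B (T (B a)) b = 0 := by
  refine ⟨fun hT a b => by simp [hT], fun hT => LinearMap.ext fun f => ?_⟩
  obtain ⟨a, rfl⟩ := hB.2 f
  exact hB.1 (LinearMap.ext fun b => by simpa using hT a b)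

lemma Tten_comm_apply_of_skew {B : A →ₗ[K] A →ₗ[K] K} (hskewB : ∀ a b : A, B a b = - B b a)
    (r : A ⊗[K] A) (a b : A) :
    B (Tten (TensorProduct.comm K A A r) (B a)) b = - B a (Tten r (B b)) := by
  have hflip : B.flip b = -B b := LinearMap.ext fun x => hskewB x b
  rw [← LinearMap.flip_apply B, Tten_comm_apply, hflip, map_neg, map_neg]

theorem stmt15_general [FiniteDimensional K A]
    (B : A →ₗ[K] A →ₗ[K] K) (hB : Function.Bijective B)
    (hskewB : ∀ a b : A, B a b = - B b a)
    (φ : A ⊗[K] A) (hφ1 : ∀ a : A, Tten φ (B a) = a)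
    (lam : K) (r : A ⊗[K] A) :
    r - (TensorProduct.comm K A A) r = -lam • φ ↔
      ∀ a b : A,
        B (Tten r (B a)) b + B a (Tten r (B b)) + lam * B a b = 0 := by
  have hs : ∀ a b : A, B (Tten (r - TensorProduct.comm K A A r + lam • φ) (B a)) b
      = B (Tten r (B a)) b + B a (Tten r (B b)) + lam * B a b := by
    intro a b
    simp [hφ1, Tten_comm_apply_of_skew hskewB]
  rw [← sub_eq_zero, neg_smul, sub_neg_eq_add, ← Tten_injective.eq_iff, Tten_zero,
    LinearMap.eq_zero_iff_forall_bilin_eq_zero hB]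
  simp only [hs]

theorem stmt15 [FiniteDimensional K A]
    (B : A →ₗ[K] A →ₗ[K] K) (hB : Function.Bijective B)
    (hskewB : ∀ a b : A, B a b = - B b a)
    (φ : A ⊗[K] A) (hφ1 : ∀ a : A, Tten φ (B a) = a)
    (hφ2 : ∀ f : Module.Dual K A, B (Tten φ f) = f)
    (lam : K) (r : A ⊗[K] A) :
    r - (TensorProduct.comm K A A) r = -lam • φ ↔
      ∀ a b : A,
        B (Tten r (B a)) b + B a (Tten r (B b)) + lam * B a b = 0 :=
  stmt15_general B hB hskewB φ hφ1 lam r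

end
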